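/- Let F : (0,∞) → (0,∞) be continuous, strictly increasing with lim_{t→∞} F(t) = ∞, slowly varying, and satisfy lim_{t→∞} F(t)/√(log t) = ∞. Let U : ℝ² → (0,∞) be measurable, Lebesgue integrable, and satisfy lim_{|x|→∞} F(1/U(x))/|x| = 1. Then for every ℓ > 0 the Gaussian convolution |φ₀|² * U satisfies lim_{|x|→∞} F(1/(|φ₀|² * U)(x))/|x| = 1. -/

import Mathlib

/-!
Write `G` for the inverse of `F`, so that the decay of `U` says `1 / U z ≈ G ‖z‖`. Averaging over
the unit ball around `x` bounds `|φ₀|² * U` below by a constant times `1 / G ((1 + ε)² ‖x‖)`.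
Splitting the integral at the ball of radius `ε ‖x‖` bounds it above by `1 / G ((1 - ε)² ‖x‖)`
plus the Gaussian tail `exp (-ε² ‖x‖² / (2ℓ²)) ‖U‖₁`; the sub-Gaussian growth of `F` gives
`G s ≤ exp (b s²)` for every `b > 0`, so the tail is of the same order. Finally, slow variation
makes the multiplicative constants invisible after applying `F`: `F (c * G s) ~ s`.
-/

open MeasureTheory Filter Real

noncomputable section

abbrev E2 := EuclideanSpace ℝ (Fin 2)

/-- The centred Gaussian probability density `|φ₀(x)|² = (2πℓ²)⁻¹ exp(-|x|²/(2ℓ²))` on `ℝ²`. -/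
def phiSq (l : ℝ) (x : E2) : ℝ := (2 * π * l ^ 2)⁻¹ * Real.exp (-‖x‖ ^ 2 / (2 * l ^ 2))

/-- The Gaussian convolution `(|φ₀|² * U)(x) = ∫ |φ₀(y)|² U(x-y) dy`. -/
def gaussConv (l : ℝ) (U : E2 → ℝ) (x : E2) : ℝ := ∫ y : E2, phiSq l y * U (x - y)

open Metric Set

section Ratio

variable {α : Type*} {L : Filter α} {f g : α → ℝ}

theorem eventually_mul_le_and_le_mul_of_tendsto_div (h : Tendsto (fun x => f x / g x) L (nhds 1))
    (hg : ∀ᶠ x in L, 0 < g x) {ε : ℝ} (hε : 0 < ε) :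
    ∀ᶠ x in L, (1 - ε) * g x ≤ f x ∧ f x ≤ (1 + ε) * g x := by
  filter_upwards [h.eventually (Ioo_mem_nhds (by linarith : 1 - ε < 1) (by linarith : 1 < 1 + ε)),
    hg] with x hx hgx
  rw [lt_div_iff₀ hgx, div_lt_iff₀ hgx] at hx
  exact ⟨hx.1.le, hx.2.le⟩

theorem tendsto_div_nhds_one_of_forall_eventually (n : ℕ) (hg : ∀ᶠ x in L, 0 < g x)
    (h : ∀ ε ∈ Ioo (0 : ℝ) 1,
      ∀ᶠ x in L, (1 - ε) ^ n * g x ≤ f x ∧ f x ≤ (1 + ε) ^ n * g x) :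
    Tendsto (fun x => f x / g x) L (nhds 1) := by
  have hsmall : ∀ᶠ ε in nhdsWithin (0 : ℝ) (Ioi 0), ε ∈ Ioo (0 : ℝ) 1 := Ioo_mem_nhdsGT one_pos
  have hlim : ∀ σ : ℝ, Tendsto (fun ε : ℝ => (1 + σ * ε) ^ n) (nhdsWithin 0 (Ioi 0)) (nhds 1) :=
    fun σ => (((continuous_const.add (continuous_const.mul continuous_id)).pow n).tendsto' 0 1
      (by simp)).mono_left nhdsWithin_le_nhds
  refine tendsto_order.2 ⟨fun a ha => ?_, fun a ha => ?_⟩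
  · obtain ⟨ε, hε, haε⟩ := (hsmall.and ((hlim (-1)).eventually (lt_mem_nhds ha))).exists
    filter_upwards [h ε hε, hg] with x hx hgx
    refine haε.trans_le ((le_div_iff₀ hgx).2 ?_)
    simpa [← sub_eq_add_neg] using hx.1
  · obtain ⟨ε, hε, haε⟩ := (hsmall.and ((hlim 1).eventually (gt_mem_nhds ha))).exists
    filter_upwards [h ε hε, hg] with x hx hgx
    refine ((div_le_iff₀ hgx).2 ?_).trans_lt haε
    simpa using hx.2

end Ratio

theorem eventually_forall_mem_closedBall {E : Type*} [SeminormedAddCommGroup E] {P : E → Prop}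
    (h : ∀ᶠ z in comap (fun z : E => ‖z‖) atTop, P z) {ε : ℝ} (hε : ε < 1) (r : ℝ) :
    ∀ᶠ x in comap (fun x : E => ‖x‖) atTop, ∀ z ∈ closedBall x (ε * ‖x‖ + r), P z := by
  obtain ⟨R, hR⟩ := eventually_atTop.1 (eventually_comap.1 h)
  filter_upwards [tendsto_comap.eventually (eventually_ge_atTop ((R + r) / (1 - ε)))]
    with x hx z hz
  rw [div_le_iff₀ (by linarith)] at hx
  refine hR ‖z‖ ?_ z rfl
  have := norm_le_norm_add_const_of_dist_le (mem_closedBall'.1 hz)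
  linarith

theorem sub_mem_closedBall_self_iff {E : Type*} [SeminormedAddCommGroup E] {x y : E} {r : ℝ} :
    x - y ∈ closedBall x r ↔ ‖y‖ ≤ r := by
  rw [mem_closedBall, dist_eq_norm, sub_sub_cancel_left, norm_neg]

section Inverse

/-- The inverse of `F` on `(0, ∞)`; a junk value outside `F '' (0, ∞)`. -/
def invOnIoi (F : ℝ → ℝ) (s : ℝ) : ℝ := Function.invFunOn F (Ioi 0) s

variable {F : ℝ → ℝ}

theorem eventually_log_le_mul_sq (hFsub : Tendsto (fun t : ℝ => F t / √(log t)) atTop atTop)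
    {b : ℝ} (hb : 0 < b) : ∀ᶠ t in atTop, log t ≤ b * F t ^ 2 := by
  filter_upwards [hFsub.eventually_ge_atTop (√b)⁻¹, eventually_gt_atTop 1] with t hFt ht
  have hlog : 0 < log t := log_pos ht
  rw [le_div_iff₀ (sqrt_pos.2 hlog), inv_mul_le_iff₀ (sqrt_pos.2 hb)] at hFt
  calc log t = √(log t) ^ 2 := (sq_sqrt hlog.le).symm
    _ ≤ (√b * F t) ^ 2 := pow_le_pow_left₀ (sqrt_nonneg _) hFt 2
    _ = b * F t ^ 2 := by rw [mul_pow, sq_sqrt hb.le]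

variable (hFcont : ContinuousOn F (Ioi 0)) (hFtop : Tendsto F atTop atTop) {s : ℝ}
include hFcont hFtop

theorem exists_pos_apply_eq (hs : F 1 ≤ s) : ∃ t ∈ Ioi (0 : ℝ), F t = s := by
  obtain ⟨T, hTs, hT1⟩ := ((hFtop.eventually_ge_atTop s).and (eventually_ge_atTop 1)).exists
  obtain ⟨t, ht, rfl⟩ := intermediate_value_Icc hT1
    (hFcont.mono fun t ht => zero_lt_one.trans_le ht.1) ⟨hs, hTs⟩
  exact ⟨t, zero_lt_one.trans_le ht.1, rfl⟩

theorem apply_invOnIoi (hs : F 1 ≤ s) : F (invOnIoi F s) = s :=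
  Function.invFunOn_eq (exists_pos_apply_eq hFcont hFtop hs)

theorem invOnIoi_pos (hs : F 1 ≤ s) : 0 < invOnIoi F s :=
  Function.invFunOn_mem (exists_pos_apply_eq hFcont hFtop hs)

variable (hFmono : StrictMonoOn F (Ioi 0))
include hFmono

theorem le_invOnIoi_iff {t : ℝ} (ht : 0 < t) (hs : F 1 ≤ s) : t ≤ invOnIoi F s ↔ F t ≤ s := by
  conv_rhs => rw [← apply_invOnIoi hFcont hFtop hs]
  exact (hFmono.le_iff_le ht (invOnIoi_pos hFcont hFtop hs)).symm

theorem invOnIoi_le_iff {t : ℝ} (ht : 0 < t) (hs : F 1 ≤ s) : invOnIoi F s ≤ t ↔ s ≤ F t := by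
  conv_rhs => rw [← apply_invOnIoi hFcont hFtop hs]
  exact (hFmono.le_iff_le (invOnIoi_pos hFcont hFtop hs) ht).symm

theorem tendsto_invOnIoi_atTop : Tendsto (invOnIoi F) atTop atTop := by
  refine tendsto_atTop.2 fun b => ?_
  filter_upwards [eventually_ge_atTop (F 1), eventually_ge_atTop (F (max b 1))] with s h1 hb
  exact (le_max_left b 1).trans
    ((le_invOnIoi_iff hFcont hFtop hFmono (by positivity) h1).2 hb)

theorem tendsto_apply_mul_invOnIoi_div
    (hFslow : ∀ c > 0, Tendsto (fun t : ℝ => F (c * t) / F t) atTop (nhds 1)) {c : ℝ}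
    (hc : 0 < c) : Tendsto (fun s => F (c * invOnIoi F s) / s) atTop (nhds 1) := by
  refine ((hFslow c hc).comp (tendsto_invOnIoi_atTop hFcont hFtop hFmono)).congr' ?_
  filter_upwards [eventually_ge_atTop (F 1)] with s hs
  simp only [Function.comp_apply, apply_invOnIoi hFcont hFtop hs]

theorem eventually_invOnIoi_le_exp
    (hFsub : Tendsto (fun t : ℝ => F t / √(log t)) atTop atTop) {b : ℝ} (hb : 0 < b) :
    ∀ᶠ s in atTop, invOnIoi F s ≤ exp (b * s ^ 2) := by
  filter_upwards [(tendsto_invOnIoi_atTop hFcont hFtop hFmono).eventually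
    (eventually_log_le_mul_sq hFsub hb), eventually_ge_atTop (F 1)] with s hlog hs
  rw [apply_invOnIoi hFcont hFtop hs] at hlog
  exact (log_le_iff_le_exp (invOnIoi_pos hFcont hFtop hs)).1 hlog

end Inverse

section Gaussian

variable {l : ℝ}

theorem phiSq_nonneg (y : E2) : 0 ≤ phiSq l y := by
  unfold phiSq
  positivity

theorem phiSq_pos (hl : 0 < l) (y : E2) : 0 < phiSq l y := by
  unfold phiSq
  have := pi_pos
  positivity

theorem continuous_phiSq : Continuous (phiSq l) := by
  unfold phiSq
  fun_prop

theorem phiSq_le_of_le_norm {r : ℝ} {y : E2} (hr : 0 ≤ r) (h : r ≤ ‖y‖) :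
    phiSq l y ≤ (2 * π * l ^ 2)⁻¹ * exp (-r ^ 2 / (2 * l ^ 2)) := by
  unfold phiSq
  gcongr

theorem le_phiSq_of_norm_le {r : ℝ} {y : E2} (h : ‖y‖ ≤ r) :
    (2 * π * l ^ 2)⁻¹ * exp (-r ^ 2 / (2 * l ^ 2)) ≤ phiSq l y := by
  unfold phiSq
  gcongr

theorem integral_phiSq (hl : 0 < l) : ∫ y, phiSq l y = 1 := by
  have h := GaussianFourier.integral_rexp_neg_mul_sq_norm (V := E2) (b := (2 * l ^ 2)⁻¹) (by positivity)
  have hφ : phiSq l = fun y => (2 * π * l ^ 2)⁻¹ * exp (-(2 * l ^ 2)⁻¹ * ‖y‖ ^ 2) := by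
    ext y
    rw [phiSq]
    congr 2
    ring
  rw [hφ, integral_const_mul, h, finrank_euclideanSpace_fin]
  have := pi_pos
  field_simp
  norm_num

theorem integrable_phiSq (hl : 0 < l) : Integrable (phiSq l) :=
  Integrable.of_integral_ne_zero (by rw [integral_phiSq hl]; exact one_ne_zero)

variable {U : E2 → ℝ}

theorem integrable_phiSq_mul_comp_sub (hU : Integrable U) (x : E2) :
    Integrable (fun y => phiSq l y * U (x - y)) :=
  (hU.comp_sub_left x).bdd_mul continuous_phiSq.aestronglyMeasurable
    (Eventually.of_forall fun y => by
      simpa [abs_of_nonneg (phiSq_nonneg y)] using phiSq_le_of_le_norm le_rfl (norm_nonneg y))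

theorem gaussConv_pos (hl : 0 < l) (hUpos : ∀ x, 0 < U x) (hU : Integrable U) (x : E2) :
    0 < gaussConv l U x := by
  have hpos : ∀ y, 0 < phiSq l y * U (x - y) := fun y => mul_pos (phiSq_pos hl y) (hUpos _)
  rw [gaussConv, integral_pos_iff_support_of_nonneg (fun y => (hpos y).le)
    (integrable_phiSq_mul_comp_sub hU x), Function.support_eq_univ fun y => (hpos y).ne']
  exact isOpen_univ.measure_pos volume univ_nonempty

theorem le_gaussConv_of_le_on_closedBall (hU0 : ∀ z, 0 ≤ U z) (hU : Integrable U) {x : E2}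
    {r u : ℝ} (hr : 0 ≤ r) (hu : 0 ≤ u) (h : ∀ z ∈ closedBall x r, u ≤ U z) :
    r ^ 2 * exp (-r ^ 2 / (2 * l ^ 2)) / (2 * l ^ 2) * u ≤ gaussConv l U x := by
  have hkey : ∀ y ∈ closedBall (0 : E2) r,
      (2 * π * l ^ 2)⁻¹ * exp (-r ^ 2 / (2 * l ^ 2)) * u ≤ phiSq l y * U (x - y) := by
    intro y hy
    rw [mem_closedBall_zero_iff] at hy
    exact mul_le_mul (le_phiSq_of_norm_le hy) (h _ (sub_mem_closedBall_self_iff.2 hy)) hu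
      (phiSq_nonneg y)
  have hInt := integrable_phiSq_mul_comp_sub (l := l) hU x
  calc r ^ 2 * exp (-r ^ 2 / (2 * l ^ 2)) / (2 * l ^ 2) * u
      = volume.real (closedBall (0 : E2) r) • ((2 * π * l ^ 2)⁻¹ * exp (-r ^ 2 / (2 * l ^ 2)) * u) := by
        rw [Measure.real, EuclideanSpace.volume_closedBall_fin_two, ENNReal.toReal_mul,
          ENNReal.toReal_pow, ENNReal.toReal_ofReal hr, ENNReal.toReal_ofReal pi_pos.le,
          smul_eq_mul]
        field_simp
    _ ≤ ∫ y in closedBall (0 : E2) r, phiSq l y * U (x - y) :=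
        setIntegral_ge_of_const_le measurableSet_closedBall measure_closedBall_lt_top.ne hkey
          hInt.integrableOn
    _ ≤ gaussConv l U x :=
        setIntegral_le_integral hInt (Eventually.of_forall fun y => mul_nonneg (phiSq_nonneg y) (hU0 _))

theorem gaussConv_le_of_le_on_closedBall (hl : 0 < l) (hU0 : ∀ z, 0 ≤ U z) (hU : Integrable U)
    {x : E2} {r u : ℝ} (hr : 0 ≤ r) (hu : 0 ≤ u) (h : ∀ z ∈ closedBall x r, U z ≤ u) :
    gaussConv l U x ≤ u + (2 * π * l ^ 2)⁻¹ * exp (-r ^ 2 / (2 * l ^ 2)) * ∫ z, U z := by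
  set M := (2 * π * l ^ 2)⁻¹ * exp (-r ^ 2 / (2 * l ^ 2))
  have hInt := integrable_phiSq_mul_comp_sub (l := l) hU x
  have hnear : ∫ y in closedBall (0 : E2) r, phiSq l y * U (x - y) ≤ u :=
    calc ∫ y in closedBall (0 : E2) r, phiSq l y * U (x - y)
        ≤ ∫ y in closedBall (0 : E2) r, phiSq l y * u :=
          setIntegral_mono_on hInt.integrableOn ((integrable_phiSq hl).mul_const u).integrableOn
            measurableSet_closedBall fun y hy => mul_le_mul_of_nonneg_left
              (h _ (sub_mem_closedBall_self_iff.2 (mem_closedBall_zero_iff.1 hy))) (phiSq_nonneg y)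
      _ ≤ ∫ y, phiSq l y * u := setIntegral_le_integral ((integrable_phiSq hl).mul_const u)
          (Eventually.of_forall fun y => mul_nonneg (phiSq_nonneg y) hu)
      _ = u := by rw [integral_mul_const, integral_phiSq hl, one_mul]
  have hfar : ∫ y in (closedBall (0 : E2) r)ᶜ, phiSq l y * U (x - y) ≤ M * ∫ z, U z :=
    calc ∫ y in (closedBall (0 : E2) r)ᶜ, phiSq l y * U (x - y)
        ≤ ∫ y in (closedBall (0 : E2) r)ᶜ, M * U (x - y) :=
          setIntegral_mono_on hInt.integrableOn ((hU.comp_sub_left x).const_mul M).integrableOn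
            measurableSet_closedBall.compl fun y hy => mul_le_mul_of_nonneg_right
              (phiSq_le_of_le_norm hr (not_le.1 fun h => hy (mem_closedBall_zero_iff.2 h)).le) (hU0 _)
      _ ≤ ∫ y, M * U (x - y) := setIntegral_le_integral ((hU.comp_sub_left x).const_mul M)
          (Eventually.of_forall fun y => mul_nonneg (by positivity) (hU0 _))
      _ = M * ∫ z, U z := by rw [integral_const_mul, integral_sub_left_eq_self]
  rw [gaussConv, ← integral_add_compl measurableSet_closedBall hInt]
  exact add_le_add hnear hfar

end Gaussian

section Decay

variable {F : ℝ → ℝ} (hFcont : ContinuousOn F (Ioi 0)) (hFmono : StrictMonoOn F (Ioi 0))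
  (hFtop : Tendsto F atTop atTop)
  (hFslow : ∀ c > 0, Tendsto (fun t : ℝ => F (c * t) / F t) atTop (nhds 1))
  {U : E2 → ℝ} (hUpos : ∀ x, 0 < U x) (hUint : Integrable U)
  (hUdecay : Tendsto (fun x : E2 => F (1 / U x) / ‖x‖) (comap (fun x : E2 => ‖x‖) atTop) (nhds 1))
  {l : ℝ} (hl : 0 < l)
include hFcont hFmono hFtop hFslow hUpos hUint hUdecay hl

theorem eventually_apply_one_div_gaussConv_le {ε : ℝ} (hε : 0 < ε) :
    ∀ᶠ x in comap (fun x : E2 => ‖x‖) atTop, F (1 / gaussConv l U x) ≤ (1 + ε) ^ 3 * ‖x‖ := by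
  set c := 1 ^ 2 * exp (-1 ^ 2 / (2 * l ^ 2)) / (2 * l ^ 2)
  have hc : 0 < c := by positivity
  have hnorm : Tendsto (fun x : E2 => ‖x‖) (comap (fun x : E2 => ‖x‖) atTop) atTop := tendsto_comap
  have hs := hnorm.const_mul_atTop (by positivity : 0 < (1 + ε) ^ 2)
  have hU := eventually_forall_mem_closedBall ((eventually_mul_le_and_le_mul_of_tendsto_div
    hUdecay (hnorm.eventually (eventually_gt_atTop 0)) hε).mono fun _ h => h.2) zero_lt_one 1
  have hslow := hs.eventually (eventually_mul_le_and_le_mul_of_tendsto_div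
    (tendsto_apply_mul_invOnIoi_div hFcont hFtop hFmono hFslow (inv_pos.2 hc))
    (eventually_gt_atTop 0) hε)
  filter_upwards [hU, hslow, hs.eventually (eventually_ge_atTop (F 1)),
    hnorm.eventually (eventually_ge_atTop ε⁻¹)] with x hUx hFx hs1 hxε
  set s := (1 + ε) ^ 2 * ‖x‖
  set G := invOnIoi F s
  have hG : 0 < G := invOnIoi_pos hFcont hFtop hs1
  have hUG : ∀ z ∈ closedBall x 1, 1 / G ≤ U z := by
    intro z hz
    have hx1 : 1 ≤ ε * ‖x‖ := (inv_le_iff_one_le_mul₀' hε).1 hxε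
    have hFz : F (1 / U z) ≤ s :=
      calc F (1 / U z) ≤ (1 + ε) * ‖z‖ := hUx z (by simpa using hz)
        _ ≤ (1 + ε) * (‖x‖ + 1) := by gcongr; exact norm_le_norm_add_const_of_dist_le hz
        _ ≤ s := by nlinarith
    rw [one_div_le hG (hUpos z)]
    exact (le_invOnIoi_iff hFcont hFtop hFmono (one_div_pos.2 (hUpos z)) hs1).2 hFz
  have hV : c * (1 / G) ≤ gaussConv l U x :=
    le_gaussConv_of_le_on_closedBall (fun z => (hUpos z).le) hUint zero_le_one (by positivity) hUG
  have hV' : 1 / gaussConv l U x ≤ c⁻¹ * G := by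
    simpa [mul_comm] using one_div_le_one_div_of_le (by positivity) hV
  calc F (1 / gaussConv l U x) ≤ F (c⁻¹ * G) :=
        hFmono.monotoneOn (one_div_pos.2 ((by positivity : 0 < c * (1 / G)).trans_le hV))
          (by positivity : 0 < c⁻¹ * G) hV'
    _ ≤ (1 + ε) * s := hFx.2
    _ = (1 + ε) ^ 3 * ‖x‖ := by ring

theorem eventually_le_apply_one_div_gaussConv
    (hFsub : Tendsto (fun t : ℝ => F t / √(log t)) atTop atTop) {ε : ℝ} (hε0 : 0 < ε)
    (hε1 : ε < 1) :
    ∀ᶠ x in comap (fun x : E2 => ‖x‖) atTop, (1 - ε) ^ 3 * ‖x‖ ≤ F (1 / gaussConv l U x) := by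
  set C := 1 + (2 * π * l ^ 2)⁻¹ * ∫ z, U z
  have hC : 0 < C := by
    have : 0 ≤ ∫ z, U z := integral_nonneg fun z => (hUpos z).le
    have := pi_pos
    positivity
  have hε' : 0 < 1 - ε := by linarith
  have hnorm : Tendsto (fun x : E2 => ‖x‖) (comap (fun x : E2 => ‖x‖) atTop) atTop := tendsto_comap
  have hs := hnorm.const_mul_atTop (by positivity : 0 < (1 - ε) ^ 2)
  have hU := eventually_forall_mem_closedBall ((eventually_mul_le_and_le_mul_of_tendsto_div
    hUdecay (hnorm.eventually (eventually_gt_atTop 0)) hε0).mono fun _ h => h.1) hε1 0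
  have hslow := hs.eventually (eventually_mul_le_and_le_mul_of_tendsto_div
    (tendsto_apply_mul_invOnIoi_div hFcont hFtop hFmono hFslow (inv_pos.2 hC))
    (eventually_gt_atTop 0) hε0)
  have hexp := hs.eventually (eventually_invOnIoi_le_exp hFcont hFtop hFmono hFsub
    (by positivity : 0 < ε ^ 2 / (2 * l ^ 2 * (1 - ε) ^ 4)))
  filter_upwards [hU, hslow, hexp, hs.eventually (eventually_ge_atTop (F 1))]
    with x hUx hFx hGx hs1
  set s := (1 - ε) ^ 2 * ‖x‖ with hs_def
  set G := invOnIoi F s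
  have hG : 0 < G := invOnIoi_pos hFcont hFtop hs1
  have hUG : ∀ z ∈ closedBall x (ε * ‖x‖), U z ≤ 1 / G := by
    intro z hz
    have hFz : s ≤ F (1 / U z) :=
      calc s = (1 - ε) * ((1 - ε) * ‖x‖) := by ring
        _ ≤ (1 - ε) * ‖z‖ := by
          gcongr
          have := norm_le_norm_add_const_of_dist_le (mem_closedBall'.1 hz)
          linarith
        _ ≤ F (1 / U z) := hUx z (by simpa using hz)
    rw [le_one_div (hUpos z) hG]
    exact (invOnIoi_le_iff hFcont hFtop hFmono (one_div_pos.2 (hUpos z)) hs1).2 hFz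
  have htail : exp (-(ε * ‖x‖) ^ 2 / (2 * l ^ 2)) ≤ 1 / G := by
    have hb : ε ^ 2 / (2 * l ^ 2 * (1 - ε) ^ 4) * s ^ 2 = (ε * ‖x‖) ^ 2 / (2 * l ^ 2) := by
      rw [hs_def]
      field_simp
    rwa [le_one_div (exp_pos _) hG, one_div, ← exp_neg, neg_div, neg_neg, ← hb]
  have hV : gaussConv l U x ≤ C * (1 / G) := by
    have hIU : 0 ≤ ∫ z, U z := integral_nonneg fun z => (hUpos z).le
    have := pi_pos
    calc gaussConv l U x ≤ _ := gaussConv_le_of_le_on_closedBall hl (fun z => (hUpos z).le)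
          hUint (by positivity) (by positivity) hUG
      _ ≤ 1 / G + (2 * π * l ^ 2)⁻¹ * (1 / G) * ∫ z, U z := by gcongr
      _ = C * (1 / G) := by ring
  have hV' : C⁻¹ * G ≤ 1 / gaussConv l U x := by
    simpa [mul_comm] using one_div_le_one_div_of_le (gaussConv_pos hl hUpos hUint x) hV
  calc (1 - ε) ^ 3 * ‖x‖ = (1 - ε) * s := by ring
    _ ≤ F (C⁻¹ * G) := hFx.1
    _ ≤ F (1 / gaussConv l U x) :=
        hFmono.monotoneOn (by positivity : 0 < C⁻¹ * G)
          (one_div_pos.2 (gaussConv_pos hl hUpos hUint x)) hV'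

end Decay

theorem stmt_6_general
    (F : ℝ → ℝ)
    (hFcont : ContinuousOn F (Set.Ioi 0))
    (hFmono : StrictMonoOn F (Set.Ioi 0))
    (hFtop : Tendsto F atTop atTop)
    (hFslow : ∀ c > 0, Tendsto (fun t : ℝ => F (c * t) / F t) atTop (nhds 1))
    (hFsub : Tendsto (fun t : ℝ => F t / Real.sqrt (Real.log t)) atTop atTop)
    (U : E2 → ℝ)
    (hUpos : ∀ x, 0 < U x)
    (hUint : Integrable U)
    (hUdecay : Tendsto (fun x : E2 => F (1 / U x) / ‖x‖)
      (comap (fun x : E2 => ‖x‖) atTop) (nhds 1))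
    (l : ℝ) (hl : 0 < l) :
    Tendsto (fun x : E2 => F (1 / gaussConv l U x) / ‖x‖)
      (comap (fun x : E2 => ‖x‖) atTop) (nhds 1) :=
  tendsto_div_nhds_one_of_forall_eventually 3
    (tendsto_comap.eventually (eventually_gt_atTop 0)) fun _ hε =>
    (eventually_le_apply_one_div_gaussConv hFcont hFmono hFtop hFslow hUpos hUint hUdecay hl
      hFsub hε.1 hε.2).and
    (eventually_apply_one_div_gaussConv_le hFcont hFmono hFtop hFslow hUpos hUint hUdecay hl hε.1)

/-- Boundary case `α = ∞`: if `U` is integrable with sub-Gaussian, regular `(F,∞)`-decay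
(`F` slowly varying), then `|φ₀|² * U` has the same decay. -/
theorem stmt_6
    (F : ℝ → ℝ)
    (hFpos : ∀ t > 0, 0 < F t)
    (hFcont : ContinuousOn F (Set.Ioi 0))
    (hFmono : StrictMonoOn F (Set.Ioi 0))
    (hFtop : Tendsto F atTop atTop)
    (hFslow : ∀ c > 0, Tendsto (fun t : ℝ => F (c * t) / F t) atTop (nhds 1))
    (hFsub : Tendsto (fun t : ℝ => F t / Real.sqrt (Real.log t)) atTop atTop)
    (U : E2 → ℝ)
    (hUpos : ∀ x, 0 < U x)
    (hUmeas : Measurable U)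
    (hUint : Integrable U)
    (hUdecay : Tendsto (fun x : E2 => F (1 / U x) / ‖x‖)
      (comap (fun x : E2 => ‖x‖) atTop) (nhds 1))
    (l : ℝ) (hl : 0 < l) :
    Tendsto (fun x : E2 => F (1 / gaussConv l U x) / ‖x‖)
      (comap (fun x : E2 => ‖x‖) atTop) (nhds 1) :=
  stmt_6_general F hFcont hFmono hFtop hFslow hFsub U hUpos hUint hUdecay l hl
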